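/- arXiv:1401.4772 — 4 statements merged into one kernel-verified Lean document; each statement's English description precedes it below -/
import Mathlib

section
/- Let G be a groupoid and n a positive natural number such that for every object x of G and every morphism g : x ⟶ x, the n-fold composite of g with itself equals the identity of x. Then the precomposition functor from (SingleObj (Multiplicative (ZMod n)) ⥤ G) to (SingleObj (Multiplicative ℤ) ⥤ G), induced by the quotient homomorphism Multiplicative ℤ →* Multiplicative (ZMod n), is bijective on objects and fully faithful; in particular it is an equivalence of categories. -/
/-!
A functor `SingleObj M ⥤ C` is an object of `C` together with a monoid homomorphism from `M` to its
endomorphisms. For a surjection `φ : M →* N` of groups, precomposition with `φ` is therefore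
fully faithful and injective on objects, and its image consists of the homomorphisms killing
`ker φ`. For reduction mod `n` on `ℤ` the kernel is generated by `n`, so the image is everything
as soon as all endomorphisms of `C` are `n`-torsion.
-/

open CategoryTheory

abbrev CategoryTheory.SingleObj.endHom {M C : Type*} [Monoid M] [Category C]
    (F : SingleObj M ⥤ C) : M →* End (F.obj (SingleObj.star M)) :=
  (F.mapEnd _).comp (SingleObj.toEnd M).toMonoidHom

namespace MonoidHom

section Monoid

variable {M N C : Type*} [Monoid M] [Monoid N] [Category C]

theorem whiskeringLeft_obj_toFunctor_faithful (φ : M →* N) :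
    ((Functor.whiskeringLeft (SingleObj M) (SingleObj N) C).obj φ.toFunctor).Faithful where
  map_injective hαβ := by
    ext
    exact NatTrans.congr_app hαβ (SingleObj.star M)

variable {φ : M →* N} (hφ : Function.Surjective φ)
include hφ

theorem whiskeringLeft_obj_toFunctor_full :
    ((Functor.whiskeringLeft (SingleObj M) (SingleObj N) C).obj φ.toFunctor).Full where
  map_surjective {F₁ F₂} γ := by
    refine ⟨SingleObj.natTrans (γ.app (SingleObj.star M)) fun a => ?_, rfl⟩
    obtain ⟨m, rfl⟩ := hφ a
    exact γ.naturality (X := SingleObj.star M) (Y := SingleObj.star M) m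

theorem whiskeringLeft_obj_toFunctor_obj_injective :
    Function.Injective
      ((Functor.whiskeringLeft (SingleObj M) (SingleObj N) C).obj φ.toFunctor).obj :=
  fun F₁ F₂ hF => CategoryTheory.Functor.ext (fun _ => Functor.congr_obj hF (SingleObj.star M))
    fun ⟨⟩ ⟨⟩ a => by
      obtain ⟨m, rfl⟩ := hφ a
      exact Functor.congr_hom hF (X := SingleObj.star M) (Y := SingleObj.star M) m

end Monoid

theorem exists_toFunctor_comp_eq {M N C : Type*} [Group M] [Group N] [Groupoid C]
    {φ : M →* N} (hφ : Function.Surjective φ) (F : SingleObj M ⥤ C)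
    (hF : φ.ker ≤ (SingleObj.endHom F).ker) :
    ∃ F' : SingleObj N ⥤ C, φ.toFunctor ⋙ F' = F := by
  refine ⟨SingleObj.functor (φ.liftOfSurjective hφ ⟨SingleObj.endHom F, hF⟩), ?_⟩
  refine CategoryTheory.Functor.ext (fun _ => rfl) fun ⟨⟩ ⟨⟩ m => ?_
  exact (φ.liftOfRightInverse_comp_apply _ _ ⟨SingleObj.endHom F, hF⟩ m).trans
    (Category.id_comp _ |>.trans (Category.comp_id _)).symm

end MonoidHom

theorem ker_toMultiplicative_intCastAddHom_le {H : Type*} [Group H] {n : ℕ}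
    (ψ : Multiplicative ℤ →* H) (hψ : ψ (Multiplicative.ofAdd 1) ^ n = 1) :
    (AddMonoidHom.toMultiplicative (Int.castAddHom (ZMod n))).ker ≤ ψ.ker := by
  intro m hm
  obtain ⟨j, hj⟩ : (n : ℤ) ∣ m.toAdd := (ZMod.intCast_zmod_eq_zero_iff_dvd _ n).mp hm
  have hm_eq : m = Multiplicative.ofAdd 1 ^ ((n : ℤ) * j) := by
    rw [← ofAdd_zsmul, smul_eq_mul, mul_one, ← hj, ofAdd_toAdd]
  rw [MonoidHom.mem_ker, hm_eq, map_zpow, zpow_mul, zpow_natCast, hψ, one_zpow]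

theorem whiskeringLeft_zmod_reduction_equivalence_of_torsion_general
    (G : Type*) [Groupoid G] (n : ℕ)
    (h : ∀ (x : G) (g : CategoryTheory.End x), g ^ n = 1) :
    Function.Bijective
      (((Functor.whiskeringLeft (SingleObj (Multiplicative ℤ))
          (SingleObj (Multiplicative (ZMod n))) G).obj
        (AddMonoidHom.toMultiplicative (Int.castAddHom (ZMod n))).toFunctor).obj) ∧
    ((Functor.whiskeringLeft (SingleObj (Multiplicative ℤ)) (SingleObj (Multiplicative (ZMod n))) G).obj
        (AddMonoidHom.toMultiplicative (Int.castAddHom (ZMod n))).toFunctor).Full ∧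
    ((Functor.whiskeringLeft (SingleObj (Multiplicative ℤ)) (SingleObj (Multiplicative (ZMod n))) G).obj
        (AddMonoidHom.toMultiplicative (Int.castAddHom (ZMod n))).toFunctor).Faithful ∧
    ((Functor.whiskeringLeft (SingleObj (Multiplicative ℤ)) (SingleObj (Multiplicative (ZMod n))) G).obj
        (AddMonoidHom.toMultiplicative (Int.castAddHom (ZMod n))).toFunctor).IsEquivalence := by
  have hφ : Function.Surjective (AddMonoidHom.toMultiplicative (Int.castAddHom (ZMod n))) :=
    ZMod.intCast_surjective
  have hbij : Function.Bijective
      ((Functor.whiskeringLeft (SingleObj (Multiplicative ℤ))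
          (SingleObj (Multiplicative (ZMod n))) G).obj
        (AddMonoidHom.toMultiplicative (Int.castAddHom (ZMod n))).toFunctor).obj :=
    ⟨MonoidHom.whiskeringLeft_obj_toFunctor_obj_injective hφ, fun F =>
      MonoidHom.exists_toFunctor_comp_eq hφ F (ker_toMultiplicative_intCastAddHom_le _ (h _ _))⟩
  have := MonoidHom.whiskeringLeft_obj_toFunctor_full (C := G) hφ
  have := MonoidHom.whiskeringLeft_obj_toFunctor_faithful (C := G)
    (AddMonoidHom.toMultiplicative (Int.castAddHom (ZMod n)))
  have := Functor.essSurj_of_surj hbij.2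
  exact ⟨hbij, inferInstance, inferInstance, { }⟩

/-- Let `G` be a groupoid and `n` a positive natural number such that every endomorphism
`g : x ⟶ x` in `G` satisfies `g ^ n = 𝟙 x`.  Then the precomposition functor from
`SingleObj (Multiplicative (ZMod n)) ⥤ G` to `SingleObj (Multiplicative ℤ) ⥤ G` (the inertia
groupoid of `G`), induced by the reduction-mod-`n` homomorphism, is bijective on objects and
fully faithful; in particular it is an equivalence of categories. -/
theorem whiskeringLeft_zmod_reduction_equivalence_of_torsion
    (G : Type*) [Groupoid G] (n : ℕ) (hn : 0 < n)
    (h : ∀ (x : G) (g : CategoryTheory.End x), g ^ n = 1) :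
    Function.Bijective
      (((Functor.whiskeringLeft (SingleObj (Multiplicative ℤ))
          (SingleObj (Multiplicative (ZMod n))) G).obj
        (AddMonoidHom.toMultiplicative (Int.castAddHom (ZMod n))).toFunctor).obj) ∧
    ((Functor.whiskeringLeft (SingleObj (Multiplicative ℤ)) (SingleObj (Multiplicative (ZMod n))) G).obj
        (AddMonoidHom.toMultiplicative (Int.castAddHom (ZMod n))).toFunctor).Full ∧
    ((Functor.whiskeringLeft (SingleObj (Multiplicative ℤ)) (SingleObj (Multiplicative (ZMod n))) G).obj
        (AddMonoidHom.toMultiplicative (Int.castAddHom (ZMod n))).toFunctor).Faithful ∧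
    ((Functor.whiskeringLeft (SingleObj (Multiplicative ℤ)) (SingleObj (Multiplicative (ZMod n))) G).obj
        (AddMonoidHom.toMultiplicative (Int.castAddHom (ZMod n))).toFunctor).IsEquivalence :=
  whiskeringLeft_zmod_reduction_equivalence_of_torsion_general G n h
end

section
/- Let G be a groupoid, ι a finite (nonempty as needed) index type, and s : ι → G a family of objects such that every object of G is isomorphic to s i for some i, and such that the set of morphisms s i ⟶ s i is finite for each i. Then there exists a positive natural number n such that for every object x of G and every morphism g : x ⟶ x, the n-fold composite of g with itself equals the identity of x. -/
open CategoryTheory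

/-!
Conjugation by an isomorphism `x ≅ y` identifies the endomorphism monoids of `x` and `y`, so the
exponent of an isotropy group only depends on the isomorphism class of its object. Every isotropy
group is therefore isomorphic to one of the finitely many finite groups `End (s i)`, and the least
common multiple of their exponents kills every endomorphism of `G`.
-/

theorem CategoryTheory.Iso.exponent_end_eq {C : Type*} [Category C] {X Y : C} (e : X ≅ Y) :
    Monoid.exponent (End X) = Monoid.exponent (End Y) :=
  Monoid.exponent_eq_of_mulEquiv e.conj

/-- Let `G` be a groupoid, `ι` a finite index type and `s : ι → G` a family of objects such that
every object of `G` is isomorphic to some `s i`, with each endomorphism set `s i ⟶ s i` finite.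
Then there is a positive natural number `n` such that every endomorphism `g : x ⟶ x` in `G`
satisfies `g ^ n = 𝟙 x`. -/
theorem exists_uniform_torsion_exponent
    (G : Type*) [Groupoid G] (ι : Type*) [Finite ι] (s : ι → G)
    (hcover : ∀ x : G, ∃ i : ι, Nonempty (x ≅ s i))
    (hfin : ∀ i : ι, Finite (s i ⟶ s i)) :
    ∃ n : ℕ, 0 < n ∧ ∀ (x : G) (g : CategoryTheory.End x), g ^ n = 1 := by
  have : Fintype ι := Fintype.ofFinite ι
  refine ⟨Finset.univ.lcm fun i => Monoid.exponent (End (s i)), ?_, fun x g => ?_⟩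
  · refine Nat.pos_of_ne_zero fun h => ?_
    obtain ⟨i, -, hi⟩ := Finset.lcm_eq_zero_iff.mp h
    have : Finite (End (s i)) := hfin i
    exact Monoid.exponent_ne_zero_of_finite hi
  · obtain ⟨i, ⟨e⟩⟩ := hcover x
    refine Monoid.exponent_dvd_iff_forall_pow_eq_one.mp ?_ g
    rw [e.exponent_end_eq]
    exact Finset.dvd_lcm (Finset.mem_univ i)
end

section
/- Let G be a groupoid, ι a finite index type, and s : ι → G a family of objects such that every object of G is isomorphic to s i for some i, and such that the set of morphisms s i ⟶ s i is finite for each i. Then there exists a positive natural number n such that the precomposition functor from (SingleObj (Multiplicative (ZMod n)) ⥤ G) to (SingleObj (Multiplicative ℤ) ⥤ G), induced by the quotient homomorphism Multiplicative ℤ →* Multiplicative (ZMod n), is an equivalence of categories. -/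
/-!
Conjugating by an isomorphism `x ≅ s i` identifies `End x` with the finite group `End (s i)`, so
every loop `g` of `G` satisfies `g ^ n = 1` for `n = ∏ i, |End (s i)|`. Because `ℤ → ℤ/n` is
surjective, precomposition with it is fully faithful, and a functor `SingleObj ℤ ⥤ G`, i.e. a loop
`g`, lies in its essential image as soon as `g ^ n = 1`: then `k ↦ g ^ k` factors through `ℤ/n`.
-/

open CategoryTheory

lemma exists_zmod_monoidHom_of_pow_eq_one {H : Type*} [Group H] {n : ℕ} {g : H}
    (hg : g ^ n = 1) :
    ∃ ψ : Multiplicative (ZMod n) →* H, ∀ k : ℤ, ψ (.ofAdd (k : ZMod n)) = g ^ k :=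
  ⟨(ZMod.lift n ⟨zmultiplesHom _ (.ofMul g), by simp [← ofMul_pow, hg]⟩).toMultiplicativeLeft,
    fun k => by simp [← ofMul_zpow]⟩

namespace CategoryTheory.SingleObj

section Monoid

variable {M N C : Type*} [Monoid M] [Monoid N] [Category C]

lemma faithful_whiskeringLeft_toFunctor (φ : M →* N) :
    ((Functor.whiskeringLeft _ _ C).obj φ.toFunctor).Faithful where
  map_injective h := NatTrans.ext (funext fun _ => congr_app h (star M))

lemma full_whiskeringLeft_toFunctor {φ : M →* N}
    (hφ : Function.Surjective φ) : ((Functor.whiskeringLeft _ _ C).obj φ.toFunctor).Full where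
  map_surjective {F F'} β := by
    refine ⟨natTrans (β.app (star M)) fun b => ?_, rfl⟩
    obtain ⟨a, rfl⟩ := hφ b
    exact β.naturality (X := star M) (Y := star M) a

lemma whiskeringLeft_toFunctor_essImage_of_factors (φ : M →* N)
    (F : SingleObj M ⥤ C) (ψ : N →* End (F.obj (star M)))
    (hψ : ∀ a : M, ψ (φ a) = F.map (X := star M) (Y := star M) a) :
    ((Functor.whiskeringLeft _ _ C).obj φ.toFunctor).essImage F :=
  ⟨functor ψ, ⟨NatIso.ofComponents (fun _ => Iso.refl _) fun a =>
    (Category.comp_id _).trans ((hψ a).trans (Category.id_comp _).symm)⟩⟩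

end Monoid

section Groupoid

variable {C : Type*} [Groupoid C]

lemma whiskeringLeft_intCast_essImage {n : ℕ} (F : SingleObj (Multiplicative ℤ) ⥤ C)
    (hF : F.mapEnd (star _) (toEnd _ (Multiplicative.ofAdd 1)) ^ n = 1) :
    ((Functor.whiskeringLeft _ _ C).obj
      (AddMonoidHom.toMultiplicative (Int.castAddHom (ZMod n))).toFunctor).essImage F := by
  obtain ⟨ψ, hψ⟩ := exists_zmod_monoidHom_of_pow_eq_one hF
  refine whiskeringLeft_toFunctor_essImage_of_factors _ F ψ fun a => ?_
  calc ψ (.ofAdd (a.toAdd : ZMod n))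
        = F.mapEnd (star _) (toEnd _ (Multiplicative.ofAdd 1)) ^ a.toAdd := hψ a.toAdd
    _ = F.mapEnd (star _) (toEnd _ (Multiplicative.ofAdd 1 ^ a.toAdd)) := by
      rw [map_zpow, map_zpow]
    _ = F.map a := by simp [← ofAdd_zsmul, toEnd_def]

lemma isEquivalence_whiskeringLeft_intCast {n : ℕ} (h : ∀ (x : C) (g : End x), g ^ n = 1) :
    ((Functor.whiskeringLeft _ _ C).obj
      (AddMonoidHom.toMultiplicative (Int.castAddHom (ZMod n))).toFunctor).IsEquivalence where
  faithful := faithful_whiskeringLeft_toFunctor _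
  full := full_whiskeringLeft_toFunctor fun a =>
    let ⟨k, hk⟩ := ZMod.intCast_surjective a.toAdd
    ⟨.ofAdd k, congrArg Multiplicative.ofAdd hk⟩
  essSurj := ⟨fun F => whiskeringLeft_intCast_essImage F (h _ _)⟩

end Groupoid

end CategoryTheory.SingleObj

namespace CategoryTheory.Groupoid

/- Loops are typed `End x`, not `x ⟶ x`: the latter carries `Groupoid.vertexGroup`, whose
multiplication is the opposite of that of `End x`. -/
lemma exists_pos_forall_pow_eq_one {G ι : Type*} [Groupoid G] [Finite ι] (s : ι → G)
    (hcover : ∀ x : G, ∃ i : ι, Nonempty (x ≅ s i)) (hfin : ∀ i : ι, Finite (s i ⟶ s i)) :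
    ∃ n : ℕ, 0 < n ∧ ∀ (x : G) (g : End x), g ^ n = 1 := by
  have := Fintype.ofFinite ι
  refine ⟨∏ i, Nat.card (End (s i)), Finset.prod_pos fun i _ => ?_, fun x g => ?_⟩
  · have : Finite (End (s i)) := hfin i
    exact Nat.card_pos
  · obtain ⟨i, ⟨e⟩⟩ := hcover x
    rw [← orderOf_dvd_iff_pow_eq_one, ← e.conj.orderOf_eq]
    exact orderOf_dvd_natCard _ |>.trans (Finset.dvd_prod_of_mem _ (Finset.mem_univ i))

end CategoryTheory.Groupoid

/-- Let `G` be a groupoid, `ι` a finite index type and `s : ι → G` a family of objects such that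
every object of `G` is isomorphic to some `s i`, with each endomorphism set `s i ⟶ s i` finite
(orbit compactness).  Then there is a positive natural number `n` such that the precomposition
functor from `SingleObj (Multiplicative (ZMod n)) ⥤ G` to `SingleObj (Multiplicative ℤ) ⥤ G`
(the inertia groupoid of `G`), induced by the reduction-mod-`n` homomorphism, is an equivalence
of categories. -/
theorem exists_zmod_reduction_whiskeringLeft_equivalence
    (G : Type*) [Groupoid G] (ι : Type*) [Finite ι] (s : ι → G)
    (hcover : ∀ x : G, ∃ i : ι, Nonempty (x ≅ s i))
    (hfin : ∀ i : ι, Finite (s i ⟶ s i)) :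
    ∃ n : ℕ, 0 < n ∧
      (((Functor.whiskeringLeft (SingleObj (Multiplicative ℤ))
          (SingleObj (Multiplicative (ZMod n))) G).obj
        (AddMonoidHom.toMultiplicative (Int.castAddHom (ZMod n))).toFunctor).IsEquivalence) := by
  obtain ⟨n, hn, hpow⟩ := Groupoid.exists_pos_forall_pow_eq_one s hcover hfin
  exact ⟨n, hn, SingleObj.isEquivalence_whiskeringLeft_intCast hpow⟩
end

section
/- Let X be a nonempty connected topological space, Y a topological space, and G a group equipped with the discrete topology acting on Y such that for each g ∈ G the map y ↦ g • y is continuous. Then the map sending a pair (g, f) ∈ G × C(X, Y) to the triple (f, f', α), where f' ∈ C(X, Y) is the pointwise translate x ↦ g • f x and α ∈ C(X, G × Y) is x ↦ (g, f x), is a bijection from G × C(X, Y) onto the set of triples (f, f', α) with f, f' ∈ C(X, Y) and α ∈ C(X, G × Y) satisfying (α x).2 = f x and (α x).1 • (α x).2 = f' x for all x ∈ X. -/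
/-! Over a connected space, the `G`-component of a continuous `α : X → G × Y` lands in a discrete
space and is therefore a constant `g`; the constraints then force `α = (g, f)` and `f' = g • f`. -/

section

variable (X Y G : Type*) [TopologicalSpace X] [TopologicalSpace Y] [TopologicalSpace G]
  [SMul G Y]

/-- Arrows `α : f ⟶ f'` of the mapping groupoid from `X` to the translation groupoid `G ⋉ Y`. -/
abbrev MapArrow :=
  {T : C(X, Y) × C(X, Y) × C(X, G × Y) //
    ∀ x : X, (T.2.2 x).2 = T.1 x ∧ (T.2.2 x).1 • (T.2.2 x).2 = T.2.1 x}

variable {X Y G}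

namespace MapArrow

variable [ContinuousConstSMul G Y]

def ofTranslate (g : G) (f : C(X, Y)) : MapArrow X Y G :=
  ⟨(f, g • f, (ContinuousMap.const X g).prodMk f), fun _ => ⟨rfl, rfl⟩⟩

theorem eq_ofTranslate [PreconnectedSpace X] [DiscreteTopology G] (T : MapArrow X Y G)
    (x₀ : X) : T = ofTranslate (T.1.2.2 x₀).1 T.1.1 := by
  obtain ⟨⟨f, f', α⟩, hT⟩ := T
  have hconst (x : X) : (α x).1 = (α x₀).1 :=
    PreconnectedSpace.constant ‹_› (continuous_fst.comp α.continuous)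
  refine Subtype.ext (Prod.ext rfl (Prod.ext ?_ ?_)) <;> ext x : 1
  · rw [← (hT x).2, hconst x, (hT x).1]
    rfl
  · exact Prod.ext (hconst x) (hT x).1

variable (X Y G) in
noncomputable def equivProd [ConnectedSpace X] [DiscreteTopology G] :
    G × C(X, Y) ≃ MapArrow X Y G where
  toFun p := ofTranslate p.1 p.2
  invFun T := ((T.1.2.2 (Classical.arbitrary X)).1, T.1.1)
  left_inv _ := rfl
  right_inv T := (eq_ofTranslate T _).symm

end MapArrow

end

/-- Let `X` be a nonempty connected topological space, `Y` a topological space, and `G` a group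
with the discrete topology acting on `Y` with each translation `y ↦ g • y` continuous.  Then
`(g, f) ↦ (f, x ↦ g • f x, x ↦ (g, f x))` is a bijection from `G × C(X, Y)` onto the set of
triples `(f, f', α)` with `f, f' ∈ C(X, Y)`, `α ∈ C(X, G × Y)`, `(α x).2 = f x` and
`(α x).1 • (α x).2 = f' x` for all `x`. -/
theorem translation_groupoid_mapping_arrows_bijection
    (X : Type*) [TopologicalSpace X] [ConnectedSpace X]
    (Y : Type*) [TopologicalSpace Y]
    (G : Type*) [Group G] [TopologicalSpace G] [DiscreteTopology G]
    [MulAction G Y] (hcont : ∀ g : G, Continuous fun y : Y => g • y) :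
    ∃ e : G × C(X, Y) ≃
        {T : C(X, Y) × C(X, Y) × C(X, G × Y) //
          ∀ x : X, (T.2.2 x).2 = T.1 x ∧ (T.2.2 x).1 • (T.2.2 x).2 = T.2.1 x},
      ∀ (g : G) (f : C(X, Y)),
        (e (g, f)).1.1 = f ∧
        (∀ x : X, (e (g, f)).1.2.1 x = g • f x) ∧
        (∀ x : X, (e (g, f)).1.2.2 x = (g, f x)) := by
  have : ContinuousConstSMul G Y := ⟨hcont⟩
  exact ⟨MapArrow.equivProd X Y G, fun _ _ => ⟨rfl, fun _ => rfl, fun _ => rfl⟩⟩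
end
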